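/- arXiv:1205.0499 — 3 statements merged into one kernel-verified Lean document; each statement's English description precedes it below -/
import Mathlib

section
/- Under the assumptions of the preceding determinant bounds, with C(τ_h,τ_c) the 2N×2N block matrix [[V⁻¹+τ_h I, V⁻¹],[V⁻¹, V⁻¹+τ_c Q]], the ratio τ_h^{N/2} τ_c^{(N−1)/2} / det(C(τ_h,τ_c))^{1/2} is bounded above by ((min Y + τ_h)/min Y)^{1/2} · (τ_h^{1/2} ∏_{i=1}^{N−1} λ_i^{1/2})⁻¹. -/
/-!
By the Schur complement of the diagonal block `diag Y + τh I`,
`det C = ∏ (Y i + τh) * det (diag (τh Y i / (Y i + τh)) + τc Q)`. The first factor is at least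
`τh ^ (n + 1)`. Every entry `τh Y i / (Y i + τh)` is at least `α = τh mY / (mY + τh)`, and the
determinant is monotone on positive semidefinite matrices, so the second factor is at least
`det (α I + τc Q) = ∏ (α + τc l i) ≥ α τc ^ n ∏_{i < n} l i`, since the last eigenvalue
of `Q` is `0`. Taking square roots gives the bound.
-/

open Matrix

namespace Matrix
variable {n : Type*} [Fintype n] [DecidableEq n]

theorem det_mul_mul_star_of_mem_unitaryGroup {R : Type*} [CommRing R] [StarRing R]
    {U : Matrix n n R} (hU : U ∈ unitaryGroup n R) (A : Matrix n n R) :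
    det (U * A * star U) = det A := by
  rw [det_mul, det_mul, mul_right_comm, ← det_mul, mem_unitaryGroup_iff.mp hU, det_one, one_mul]

theorem PosSemidef.one_le_det_one_add {M : Matrix n n ℝ} (hM : M.PosSemidef) :
    1 ≤ det (1 + M) := by
  set U : Matrix n n ℝ := (hM.1.eigenvectorUnitary : Matrix n n ℝ)
  have hU : U ∈ unitaryGroup n ℝ := SetLike.coe_mem _
  have hdiag : 1 + M = U * diagonal (fun i => 1 + hM.1.eigenvalues i) * star U := by
    have h1 : diagonal (fun i => 1 + hM.1.eigenvalues i) =
        1 + diagonal (RCLike.ofReal ∘ hM.1.eigenvalues) := by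
      rw [← diagonal_one, diagonal_add]; rfl
    conv_lhs => rw [hM.1.spectral_theorem, Unitary.conjStarAlgAut_apply]
    rw [h1, mul_add, add_mul, mul_one, mem_unitaryGroup_iff.mp hU]
  rw [hdiag, det_mul_mul_star_of_mem_unitaryGroup hU, det_diagonal]
  exact Finset.one_le_prod fun i _ => le_add_of_nonneg_right (hM.eigenvalues_nonneg i)

open scoped MatrixOrder in
theorem PosSemidef.det_le_det_add {A B : Matrix n n ℝ} (hA : A.PosSemidef) (hB : B.PosSemidef) :
    det A ≤ det (A + B) := by
  rcases eq_or_ne A.det 0 with hA0 | hA0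
  · rw [hA0]; exact (hA.add hB).det_nonneg
  set S := CFC.sqrt A
  have hSS : S * S = A := CFC.sqrt_mul_sqrt_self A hA.nonneg
  have hS : IsUnit S.det := by
    refine isUnit_iff_ne_zero.mpr fun h => hA0 ?_
    rw [← hSS, det_mul, h, zero_mul]
  have hSherm : S.IsHermitian := (CFC.sqrt_nonneg A).posSemidef.1
  have hM : (S⁻¹ * B * S⁻¹).PosSemidef := by
    have := hB.mul_mul_conjTranspose_same S⁻¹
    rwa [hSherm.inv.eq] at this
  have hsplit : A + B = S * (1 + S⁻¹ * B * S⁻¹) * S := by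
    rw [mul_add, add_mul, mul_one, hSS, ← mul_assoc, ← mul_assoc, mul_nonsing_inv _ hS, one_mul,
      mul_assoc, nonsing_inv_mul _ hS, mul_one]
  calc det A = det A * 1 := (mul_one _).symm
    _ ≤ det A * det (1 + S⁻¹ * B * S⁻¹) :=
      mul_le_mul_of_nonneg_left hM.one_le_det_one_add hA.det_nonneg
    _ = det (A + B) := by
      rw [hsplit, det_mul, det_mul, ← hSS, det_mul]; ring

theorem det_fromBlocks_diagonal {α : Type*} [Field α]
    {d b c : n → α} (hd : ∀ i, d i ≠ 0) (D : Matrix n n α) :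
    det (fromBlocks (diagonal d) (diagonal b) (diagonal c) D) =
      (∏ i, d i) * det (D - diagonal fun i => c i * b i / d i) := by
  let : Invertible (diagonal d) :=
    ⟨diagonal d⁻¹, by simp [diagonal_mul_diagonal, hd], by simp [diagonal_mul_diagonal, hd]⟩
  rw [det_fromBlocks₁₁, det_diagonal]
  change _ * det (D - diagonal c * diagonal d⁻¹ * diagonal b) = _
  simp only [diagonal_mul_diagonal, Pi.inv_apply, div_eq_mul_inv, mul_right_comm]

theorem det_fromBlocks_diagonal_add_smul_one {α : Type*} [Field α] {Y : n → α} {t : α}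
    (hYt : ∀ i, Y i + t ≠ 0) (D : Matrix n n α) :
    det (fromBlocks (diagonal Y + t • 1) (diagonal Y) (diagonal Y) (diagonal Y + D)) =
      (∏ i, (Y i + t)) * det (diagonal (fun i => t * Y i / (Y i + t)) + D) := by
  rw [smul_one_eq_diagonal, diagonal_add, det_fromBlocks_diagonal hYt, add_sub_right_comm,
    diagonal_sub]
  congr 4 with i
  field_simp [hYt i]
  ring

theorem prod_add_le_det_diagonal_add_conj {U : Matrix n n ℝ} (hU : U ∈ unitaryGroup n ℝ)
    {l a : n → ℝ} {α : ℝ} (hαl : ∀ i, 0 ≤ α + l i) (ha : ∀ i, α ≤ a i) :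
    ∏ i, (α + l i) ≤ det (diagonal a + U * diagonal l * star U) := by
  have hconj : U * diagonal (fun i => α + l i) * star U = α • 1 + U * diagonal l * star U := by
    rw [show diagonal (fun i => α + l i) = α • 1 + diagonal l by
        rw [smul_one_eq_diagonal, diagonal_add],
      mul_add, add_mul, Matrix.mul_smul, Matrix.smul_mul, mul_one, mem_unitaryGroup_iff.mp hU]
  have hpsd : (U * diagonal (fun i => α + l i) * star U).PosSemidef := by
    have hd : (diagonal fun i => α + l i).PosSemidef :=
      posSemidef_diagonal_iff.mpr hαl
    have := hd.mul_mul_conjTranspose_same U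
    rwa [← star_eq_conjTranspose] at this
  have hsplit : diagonal a + U * diagonal l * star U =
      U * diagonal (fun i => α + l i) * star U + diagonal (fun i => a i - α) := by
    rw [hconj, add_right_comm, smul_one_eq_diagonal, diagonal_add]
    simp only [add_sub_cancel]
  rw [hsplit, ← det_diagonal, ← det_mul_mul_star_of_mem_unitaryGroup hU]
  exact hpsd.det_le_det_add (posSemidef_diagonal_iff.mpr fun i => sub_nonneg.mpr (ha i))

end Matrix

theorem mul_prod_castSucc_le_prod_add {n : ℕ} {α : ℝ} (hα : 0 ≤ α)
    {l : Fin (n + 1) → ℝ} (hl : ∀ i, 0 ≤ l i) (hlast : l (Fin.last n) = 0) :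
    α * ∏ i : Fin n, l i.castSucc ≤ ∏ i, (α + l i) := by
  rw [Fin.prod_univ_castSucc, hlast, add_zero, mul_comm]
  exact mul_le_mul_of_nonneg_right
    (Finset.prod_le_prod (fun i _ => hl _) fun i _ => le_add_of_nonneg_left hα) hα

theorem mul_div_add_le_mul_div_add {a m y : ℝ} (ha : 0 ≤ a) (hm : 0 < m) (hmy : m ≤ y) :
    a * m / (m + a) ≤ a * y / (y + a) := by
  rw [div_le_div_iff₀ (by positivity) (by linarith)]
  nlinarith [mul_le_mul_of_nonneg_left hmy (mul_nonneg ha ha)]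

theorem rpow_half_mul_div_sqrt_le {n : ℕ} {a b m L D : ℝ} (ha : 0 < a) (hb : 0 < b) (hm : 0 < m)
    (hL : 0 < L) (hD : a ^ (n + 1) * (a * m / (m + a) * (b ^ n * L)) ≤ D) :
    a ^ ((n + 1 : ℝ) / 2) * b ^ ((n : ℝ) / 2) / √D ≤ √((m + a) / m) / (√a * √L) := by
  have hK : 0 < a ^ (n + 1) * (a * m / (m + a) * (b ^ n * L)) := by positivity
  have hsqrt {c : ℝ} (k : ℕ) (hc : 0 ≤ c) : c ^ ((k : ℝ) / 2) = √(c ^ k) := by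
    rw [Real.sqrt_eq_rpow, ← Real.rpow_natCast, ← Real.rpow_mul hc, mul_one_div]
  calc a ^ ((n + 1 : ℝ) / 2) * b ^ ((n : ℝ) / 2) / √D
      ≤ √(a ^ (n + 1)) * √(b ^ n) / √(a ^ (n + 1) * (a * m / (m + a) * (b ^ n * L))) := by
        rw [← hsqrt n hb.le, ← hsqrt (n + 1) ha.le]
        push_cast
        exact div_le_div_of_nonneg_left (by positivity) (Real.sqrt_pos.mpr hK)
          (Real.sqrt_le_sqrt hD)
    _ = √((m + a) / m) / (√a * √L) := by
        rw [← Real.sqrt_mul (by positivity), ← Real.sqrt_div (by positivity),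
          ← Real.sqrt_mul ha.le, ← Real.sqrt_div (by positivity)]
        congr 1
        field_simp

theorem det_ratio_bound_general {n : ℕ}
    (Y : Fin (n + 1) → ℝ) (hY : ∀ i, 0 < Y i)
    (Q U : Matrix (Fin (n + 1)) (Fin (n + 1)) ℝ) (l : Fin (n + 1) → ℝ)
    (hU : U ∈ Matrix.orthogonalGroup (Fin (n + 1)) ℝ)
    (hdiag : Q = U * Matrix.diagonal l * U.transpose)
    (hlast : l (Fin.last n) = 0)
    (hpos : ∀ i : Fin (n + 1), i ≠ Fin.last n → 0 < l i)
    (τh τc : ℝ) (hτh : 0 < τh) (hτc : 0 < τc)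
    (C : Matrix (Fin (n + 1) ⊕ Fin (n + 1)) (Fin (n + 1) ⊕ Fin (n + 1)) ℝ)
    (hC : C = Matrix.fromBlocks
      (Matrix.diagonal Y + τh • (1 : Matrix (Fin (n + 1)) (Fin (n + 1)) ℝ))
      (Matrix.diagonal Y) (Matrix.diagonal Y)
      (Matrix.diagonal Y + τc • Q))
    (mY : ℝ) (hmY : mY = Finset.univ.inf' Finset.univ_nonempty Y) :
    τh ^ ((n + 1 : ℝ) / 2) * τc ^ ((n : ℝ) / 2) / Real.sqrt C.det ≤
      Real.sqrt ((mY + τh) / mY) /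
        (Real.sqrt τh * ∏ i : Fin n, Real.sqrt (l i.castSucc)) := by
  have hmY_pos : 0 < mY := hmY ▸ (Finset.lt_inf'_iff _).mpr fun i _ => hY i
  have hmY_le : ∀ i, mY ≤ Y i := fun i => hmY ▸ Finset.inf'_le _ (Finset.mem_univ i)
  have hl : ∀ i, 0 ≤ l i := fun i => by
    rcases eq_or_ne i (Fin.last n) with rfl | hi
    exacts [hlast.ge, (hpos i hi).le]
  have hl_pos : ∀ i : Fin n, 0 < l i.castSucc := fun i => hpos _ (Fin.castSucc_lt_last i).ne
  have hQ : τc • Q = U * diagonal (τc • l) * star U := by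
    -- `star U` is `Uᵀ` for real matrices
    rw [hdiag, diagonal_smul, Matrix.mul_smul, Matrix.smul_mul]; rfl
  have hdet₁ : τh ^ (n + 1) ≤ ∏ i, (Y i + τh) := by
    simpa using Finset.prod_le_prod (s := Finset.univ) (fun _ _ => hτh.le)
      fun i _ => le_add_of_nonneg_left (hY i).le
  have hdet₂ : τh * mY / (mY + τh) * (τc ^ n * ∏ i : Fin n, l i.castSucc) ≤
      det (diagonal (fun i => τh * Y i / (Y i + τh)) + τc • Q) := by
    have hα : 0 ≤ τh * mY / (mY + τh) := by positivity
    have hτcl : ∀ i, 0 ≤ (τc • l) i := fun i => mul_nonneg hτc.le (hl i)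
    rw [← Fin.prod_const, ← Finset.prod_mul_distrib, hQ]
    exact (mul_prod_castSucc_le_prod_add hα hτcl (by simp [hlast])).trans <|
      prod_add_le_det_diagonal_add_conj hU (fun i => add_nonneg hα (hτcl i)) fun i =>
        mul_div_add_le_mul_div_add hτh.le hmY_pos (hmY_le i)
  have hL : 0 < ∏ i : Fin n, l i.castSucc := Finset.prod_pos fun i _ => hl_pos i
  rw [← Real.sqrt_prod _ fun i _ => (hl_pos i).le]
  refine rpow_half_mul_div_sqrt_le hτh hτc hmY_pos hL ?_
  rw [hC, det_fromBlocks_diagonal_add_smul_one fun i => (add_pos (hY i) hτh).ne']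
  exact mul_le_mul hdet₁ hdet₂ (by positivity) ((pow_pos hτh _).le.trans hdet₁)

theorem det_ratio_bound {n : ℕ}
    (Y : Fin (n + 1) → ℝ) (hY : ∀ i, 0 < Y i)
    (Q U : Matrix (Fin (n + 1)) (Fin (n + 1)) ℝ) (l : Fin (n + 1) → ℝ)
    (hQpsd : Q.PosSemidef)
    (hU : U ∈ Matrix.orthogonalGroup (Fin (n + 1)) ℝ)
    (hdiag : Q = U * Matrix.diagonal l * U.transpose)
    (hlast : l (Fin.last n) = 0)
    (hpos : ∀ i : Fin (n + 1), i ≠ Fin.last n → 0 < l i)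
    (τh τc : ℝ) (hτh : 0 < τh) (hτc : 0 < τc)
    (C : Matrix (Fin (n + 1) ⊕ Fin (n + 1)) (Fin (n + 1) ⊕ Fin (n + 1)) ℝ)
    (hC : C = Matrix.fromBlocks
      (Matrix.diagonal Y + τh • (1 : Matrix (Fin (n + 1)) (Fin (n + 1)) ℝ))
      (Matrix.diagonal Y) (Matrix.diagonal Y)
      (Matrix.diagonal Y + τc • Q))
    (mY : ℝ) (hmY : mY = Finset.univ.inf' Finset.univ_nonempty Y) :
    τh ^ ((n + 1 : ℝ) / 2) * τc ^ ((n : ℝ) / 2) / Real.sqrt C.det ≤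
      Real.sqrt ((mY + τh) / mY) /
        (Real.sqrt τh * ∏ i : Fin n, Real.sqrt (l i.castSucc)) :=
  det_ratio_bound_general Y hY Q U l hU hdiag hlast hpos τh τc hτh hτc C hC mY hmY
end

section
/- Let B = [τ_c Q̃ + diag(τ_h Y_i/(Y_i+τ_h))]⁻¹ where Q̃ is symmetric positive definite, Y_i > 0, τ_h, τ_c > 0, and let μ = B · diag(τ_h Y_i²/(Y_i+τ_h)) · û. Then ‖τ_c μ‖ ≤ ‖Q̃⁻¹‖ · ‖diag(Y²)‖ · ‖û‖. -/
/-!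
Write `A = τc • Q̃ + D` with `D = diag(τh Yᵢ / (Yᵢ + τh)) ⪰ 0`, so that `B = A⁻¹`. Positivity of
`S = Q̃⁻¹`, evaluated at `‖S‖ • Q̃ y - y`, gives `‖y‖² ≤ ‖Q̃⁻¹‖ ⟪Q̃ y, y⟫`, i.e. `Q̃ ⪰ ‖Q̃⁻¹‖⁻¹`.
Hence `τc ‖y‖² ≤ ‖Q̃⁻¹‖ ⟪A y, y⟫ ≤ ‖Q̃⁻¹‖ ‖A y‖ ‖y‖`, which says `τc ‖B‖ ≤ ‖Q̃⁻¹‖`. The remaining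
diagonal factor has entries `Yᵢ² · τh / (Yᵢ + τh) ∈ [0, Yᵢ²]`, so its norm is at most `‖diag(Y²)‖`.
-/

open Matrix
open scoped Matrix.Norms.L2Operator RealInnerProductSpace ComplexOrder

section InnerProductSpace
variable {E : Type*} [NormedAddCommGroup E] [InnerProductSpace ℝ E]

theorem ContinuousLinearMap.IsPositive.norm_sq_le_opNorm_mul_inner {S T : E →L[ℝ] E}
    (hS : S.IsPositive) (hST : S * T = 1) (y : E) : ‖y‖ ^ 2 ≤ ‖S‖ * ⟪T y, y⟫ := by
  have hy : S (T y) = y := congr($hST y)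
  rcases (norm_nonneg S).eq_or_lt with hr | hr
  · rw [← hr, zero_mul, ← hy, norm_eq_zero.mp hr.symm]
    simp
  set r := ‖S‖
  have hSy : ⟪S y, y⟫ ≤ r * ‖y‖ ^ 2 := by
    calc ⟪S y, y⟫ ≤ ‖S y‖ * ‖y‖ := real_inner_le_norm _ _
      _ ≤ r * ‖y‖ * ‖y‖ := by gcongr; exact S.le_opNorm y
      _ = r * ‖y‖ ^ 2 := by ring
  have hSyTy : ⟪S y, T y⟫ = ‖y‖ ^ 2 := by
    rw [hS.inner_left_eq_inner_right, hy, real_inner_self_eq_norm_sq]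
  have hquad := hS.inner_nonneg_left (r • T y - y)
  simp only [map_sub, map_smul, hy, inner_sub_left, inner_sub_right, real_inner_smul_left,
    real_inner_smul_right, hSyTy, real_inner_self_eq_norm_sq, real_inner_comm (T y) y] at hquad
  have : 0 ≤ r * (r * ⟪T y, y⟫ - ‖y‖ ^ 2) := by linarith
  linarith [(mul_nonneg_iff_of_pos_left hr).mp this]

theorem ContinuousLinearMap.mul_norm_le_of_mul_norm_sq_le_inner {A : E →L[ℝ] E} {c K : ℝ}
    (hK : 0 ≤ K) {y : E} (h : c * ‖y‖ ^ 2 ≤ K * ⟪A y, y⟫) : c * ‖y‖ ≤ K * ‖A y‖ := by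
  rcases (norm_nonneg y).eq_or_lt with hy | hy
  · rw [← hy, mul_zero]
    positivity
  refine le_of_mul_le_mul_right ?_ hy
  calc c * ‖y‖ * ‖y‖ = c * ‖y‖ ^ 2 := by ring
    _ ≤ K * ⟪A y, y⟫ := h
    _ ≤ K * (‖A y‖ * ‖y‖) := by gcongr; exact real_inner_le_norm _ _
    _ = K * ‖A y‖ * ‖y‖ := by ring

end InnerProductSpace

section Matrix
variable {n : Type*} [Fintype n] [DecidableEq n]

theorem Matrix.PosSemidef.isPositive_toEuclideanCLM {𝕜 : Type*} [RCLike 𝕜] {A : Matrix n n 𝕜}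
    (hA : A.PosSemidef) : (toEuclideanCLM (n := n) (𝕜 := 𝕜) A).IsPositive :=
  isPositive_toEuclideanLin_iff.mpr hA

theorem Matrix.l2_opNorm_diagonal_le_of_norm_le {𝕜 : Type*} [RCLike 𝕜] {a b : n → 𝕜}
    (h : ∀ i, ‖a i‖ ≤ ‖b i‖) : ‖diagonal a‖ ≤ ‖diagonal b‖ := by
  rw [l2_opNorm_diagonal, l2_opNorm_diagonal]
  exact pi_norm_le_iff_of_nonneg (norm_nonneg b) |>.mpr fun i ↦ (h i).trans (norm_le_pi_norm b i)

theorem Matrix.PosDef.mul_l2_opNorm_inv_smul_add_le {Q D : Matrix n n ℝ} (hQ : Q.PosDef)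
    (hD : D.PosSemidef) {c : ℝ} (hc : 0 < c) : c * ‖(c • Q + D)⁻¹‖ ≤ ‖Q⁻¹‖ := by
  set A := c • Q + D
  have hA : A.PosDef := (hQ.smul hc).add_posSemidef hD
  have hAA : toEuclideanCLM (𝕜 := ℝ) A * toEuclideanCLM (𝕜 := ℝ) A⁻¹ = 1 := by
    rw [← map_mul, mul_nonsing_inv _ ((isUnit_iff_isUnit_det A).mp hA.isUnit), map_one]
  have hQQ : toEuclideanCLM (𝕜 := ℝ) Q⁻¹ * toEuclideanCLM (𝕜 := ℝ) Q = 1 := by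
    rw [← map_mul, nonsing_inv_mul _ ((isUnit_iff_isUnit_det Q).mp hQ.isUnit), map_one]
  rw [← le_div_iff₀' hc, ← l2_opNorm_toEuclideanCLM]
  refine ContinuousLinearMap.opNorm_le_bound _ (by positivity) fun v ↦ ?_
  rw [div_mul_eq_mul_div, le_div_iff₀' hc]
  set y := toEuclideanCLM (𝕜 := ℝ) A⁻¹ v
  have hv : toEuclideanCLM (𝕜 := ℝ) A y = v := congr($hAA v)
  rw [← hv]
  refine ContinuousLinearMap.mul_norm_le_of_mul_norm_sq_le_inner (norm_nonneg _) ?_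
  have hQy := hQ.inv.posSemidef.isPositive_toEuclideanCLM.norm_sq_le_opNorm_mul_inner hQQ y
  have hDy := hD.isPositive_toEuclideanCLM.inner_nonneg_left y
  rw [l2_opNorm_toEuclideanCLM] at hQy
  rw [map_add, map_smul, _root_.add_apply, _root_.smul_apply, inner_add_left, real_inner_smul_left]
  calc c * ‖y‖ ^ 2 ≤ c * (‖Q⁻¹‖ * ⟪toEuclideanCLM (𝕜 := ℝ) Q y, y⟫) := by gcongr
    _ ≤ ‖Q⁻¹‖ * (c * ⟪toEuclideanCLM (𝕜 := ℝ) Q y, y⟫ + ⟪toEuclideanCLM (𝕜 := ℝ) D y, y⟫) := by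
      nlinarith [mul_nonneg (norm_nonneg Q⁻¹) hDy]

end Matrix

theorem norm_tau_c_mu_bound {N : ℕ}
    (Qt : Matrix (Fin N) (Fin N) ℝ) (hQt : Qt.PosDef)
    (Y : Fin N → ℝ) (hY : ∀ i, 0 < Y i)
    (τh τc : ℝ) (hτh : 0 < τh) (hτc : 0 < τc)
    (uhat : EuclideanSpace ℝ (Fin N))
    (B : Matrix (Fin N) (Fin N) ℝ)
    (hB : B = (τc • Qt + Matrix.diagonal (fun i => τh * Y i / (Y i + τh)))⁻¹)
    (μ : EuclideanSpace ℝ (Fin N))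
    (hμ : μ = (WithLp.equiv 2 (Fin N → ℝ)).symm
      ((B * Matrix.diagonal (fun i => τh * Y i ^ 2 / (Y i + τh))).mulVec uhat)) :
    ‖τc • μ‖ ≤ ‖Matrix.toEuclideanCLM (𝕜 := ℝ) Qt⁻¹‖ *
      ‖Matrix.toEuclideanCLM (𝕜 := ℝ) (Matrix.diagonal (fun i => Y i ^ 2))‖ * ‖uhat‖ := by
  have hD : (diagonal fun i ↦ τh * Y i / (Y i + τh)).PosSemidef :=
    PosSemidef.diagonal fun i ↦ by have := hY i; positivity
  have hE : ∀ i, ‖τh * Y i ^ 2 / (Y i + τh)‖ ≤ ‖Y i ^ 2‖ := fun i ↦ by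
    have := hY i
    rw [Real.norm_of_nonneg (by positivity), Real.norm_of_nonneg (by positivity),
      div_le_iff₀ (by positivity)]
    nlinarith
  calc ‖τc • μ‖ = τc * ‖μ‖ := by rw [norm_smul, Real.norm_of_nonneg hτc.le]
    _ ≤ τc * (‖B * diagonal fun i ↦ τh * Y i ^ 2 / (Y i + τh)‖ * ‖uhat‖) := by
      gcongr
      rw [hμ]
      exact l2_opNorm_mulVec _ _
    _ ≤ τc * (‖B‖ * ‖diagonal fun i ↦ τh * Y i ^ 2 / (Y i + τh)‖ * ‖uhat‖) := by
      gcongr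
      exact l2_opNorm_mul _ _
    _ = τc * ‖B‖ * ‖diagonal fun i ↦ τh * Y i ^ 2 / (Y i + τh)‖ * ‖uhat‖ := by ring
    _ ≤ ‖Qt⁻¹‖ * ‖diagonal fun i ↦ Y i ^ 2‖ * ‖uhat‖ := by
      gcongr
      · exact hB ▸ hQt.mul_l2_opNorm_inv_smul_add_le hD hτc
      · exact l2_opNorm_diagonal_le_of_norm_le hE
end

section
/- For a uniformly ergodic Markov chain {X_n} with stationary distribution π and a function g with E_π g² < ∞, the asymptotic variance σ_g² = var_π(g(X₁)) + 2∑_{i=2}^∞ cov_π(g(X₁), g(X_i)) is finite (the autocovariance series converges absolutely). -/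
open MeasureTheory ProbabilityTheory

/-- Iterates of a Markov kernel. -/
noncomputable def kernelPow {Ω : Type*} [MeasurableSpace Ω]
    (P : ProbabilityTheory.Kernel Ω Ω) : ℕ → ProbabilityTheory.Kernel Ω Ω
  | 0 => ProbabilityTheory.Kernel.id
  | n + 1 => (kernelPow P n) ∘ₖ P

/-!
If `|μ A - ν A| ≤ δ` for every set `A`, split `∫ g dμ - ∫ g dν` along a Hahn decomposition of
`(μ, ν)`: each half is the integral of `g` against a measure of mass at most `δ` lying below `μ`
or `ν`, so Cauchy–Schwarz gives `|∫ g dμ - ∫ g dν|² ≤ 2δ (∫ g² dμ + ∫ g² dν)`.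
Applied to `μ = Pⁿ(x, ·)`, `ν = π` and integrated against the stationary `π`, this shows
`‖Pⁿg - π g‖₂ ≤ 2 √(M tⁿ) ‖g‖₂`. The `n`-th autocovariance is `∫ g (Pⁿg - π g) dπ`, so by
Cauchy–Schwarz once more it is at most `2 √M (√t)ⁿ ‖g‖₂²`, a summable geometric sequence.
-/

open scoped ENNReal

lemma ENNReal.add_sq_le_two_mul (a b : ℝ≥0∞) : (a + b) ^ 2 ≤ 2 * (a ^ 2 + b ^ 2) := by
  have := ENNReal.rpow_add_le_mul_rpow_add_rpow a b one_le_two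
  norm_num at this
  exact this

namespace MeasureTheory

variable {α : Type*} {mα : MeasurableSpace α}

lemma sq_eLpNorm_two_eq_lintegral {E : Type*} [NormedAddCommGroup E] (f : α → E)
    (μ : Measure α) : eLpNorm f 2 μ ^ 2 = ∫⁻ x, ‖f x‖ₑ ^ 2 ∂μ := by
  have := eLpNorm_nnreal_pow_eq_lintegral (f := f) (μ := μ) (p := 2) two_ne_zero
  norm_num at this
  exact this

lemma abs_integral_mul_le_eLpNorm_mul_eLpNorm {μ : Measure α} {f g : α → ℝ}
    (hf : MemLp f 2 μ) (hg : MemLp g 2 μ) :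
    |∫ x, f x * g x ∂μ| ≤ (eLpNorm f 2 μ).toReal * (eLpNorm g 2 μ).toReal := by
  have hHolder : ‖∫ x, f x * g x ∂μ‖ₑ ≤ eLpNorm f 2 μ * eLpNorm g 2 μ :=
    calc ‖∫ x, f x * g x ∂μ‖ₑ ≤ eLpNorm (f • g) 1 μ := by
          rw [eLpNorm_one_eq_lintegral_enorm]; exact enorm_integral_le_lintegral_enorm _
      _ ≤ eLpNorm f 2 μ * eLpNorm g 2 μ :=
          eLpNorm_smul_le_mul_eLpNorm hg.aestronglyMeasurable hf.aestronglyMeasurable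
  rw [← ENNReal.toReal_mul, ← Real.norm_eq_abs, ← toReal_enorm]
  exact ENNReal.toReal_mono (ENNReal.mul_ne_top hf.eLpNorm_ne_top hg.eLpNorm_ne_top) hHolder

lemma sub_le_ofReal_of_abs_measureReal_sub_le {μ ν : Measure α} [IsFiniteMeasure μ]
    [IsFiniteMeasure ν] {δ : ℝ} {A : Set α} (h : |μ.real A - ν.real A| ≤ δ) :
    μ A - ν A ≤ ENNReal.ofReal δ := by
  rw [← ofReal_measureReal, ← ofReal_measureReal, ← ENNReal.ofReal_sub _ measureReal_nonneg]
  exact ENNReal.ofReal_le_ofReal ((le_abs_self _).trans h)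

variable {E : Type*} [NormedAddCommGroup E] [NormedSpace ℝ E]

lemma sq_enorm_integral_le_measure_univ_mul_of_le {μ ν : Measure α} (hνμ : ν ≤ μ) {f : α → E}
    (hf : AEStronglyMeasurable f μ) :
    ‖∫ x, f x ∂ν‖ₑ ^ 2 ≤ ν Set.univ * ∫⁻ x, ‖f x‖ₑ ^ 2 ∂μ := by
  have hCS : eLpNorm f 1 ν ≤ eLpNorm f 2 ν * ν Set.univ ^ (1 / 2 : ℝ) := by
    convert eLpNorm_le_eLpNorm_mul_rpow_measure_univ one_le_two (hf.mono_measure hνμ) using 3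
    norm_num
  calc ‖∫ x, f x ∂ν‖ₑ ^ 2 ≤ eLpNorm f 1 ν ^ 2 := by
        rw [eLpNorm_one_eq_lintegral_enorm]
        gcongr
        exact enorm_integral_le_lintegral_enorm f
    _ ≤ (eLpNorm f 2 ν * ν Set.univ ^ (1 / 2 : ℝ)) ^ 2 := by gcongr
    _ = ν Set.univ * ∫⁻ x, ‖f x‖ₑ ^ 2 ∂ν := by
        rw [mul_pow, sq_eLpNorm_two_eq_lintegral, ← ENNReal.rpow_natCast (_ ^ _),
          ← ENNReal.rpow_mul]
        norm_num [mul_comm]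
    _ ≤ ν Set.univ * ∫⁻ x, ‖f x‖ₑ ^ 2 ∂μ := by gcongr

lemma sq_enorm_integral_sub_le_of_le {μ ν : Measure α} [IsFiniteMeasure μ] (hνμ : ν ≤ μ)
    {f : α → E} (hf : Integrable f μ) :
    ‖∫ x, f x ∂μ - ∫ x, f x ∂ν‖ₑ ^ 2 ≤ (μ Set.univ - ν Set.univ) * ∫⁻ x, ‖f x‖ₑ ^ 2 ∂μ := by
  have := isFiniteMeasure_of_le μ hνμ
  have hsplit : ∫ x, f x ∂μ - ∫ x, f x ∂ν = ∫ x, f x ∂(μ - ν) := by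
    conv_lhs => rw [← Measure.sub_add_cancel_of_le hνμ]
    rw [integral_add_measure (hf.mono_measure Measure.sub_le) (hf.mono_measure hνμ),
      add_sub_cancel_right]
  rw [hsplit, ← Measure.sub_apply MeasurableSet.univ hνμ]
  exact sq_enorm_integral_le_measure_univ_mul_of_le Measure.sub_le hf.aestronglyMeasurable

lemma sq_enorm_integral_sub_le_of_abs_measureReal_sub_le {μ ν : Measure α} [IsFiniteMeasure μ]
    [IsFiniteMeasure ν] {δ : ℝ} (hμν : ∀ A, MeasurableSet A → |μ.real A - ν.real A| ≤ δ)
    {f : α → E} (hfμ : Integrable f μ) (hfν : Integrable f ν) :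
    ‖∫ x, f x ∂μ - ∫ x, f x ∂ν‖ₑ ^ 2 ≤
      2 * ENNReal.ofReal δ * (∫⁻ x, ‖f x‖ₑ ^ 2 ∂μ + ∫⁻ x, ‖f x‖ₑ ^ 2 ∂ν) := by
  obtain ⟨s, hs⟩ := exists_isHahnDecomposition μ ν
  set a := ∫ x in sᶜ, f x ∂μ - ∫ x in sᶜ, f x ∂ν
  set b := ∫ x in s, f x ∂ν - ∫ x in s, f x ∂μ
  have hsplit : ∫ x, f x ∂μ - ∫ x, f x ∂ν = a - b := by
    rw [← integral_add_compl hs.measurableSet hfμ, ← integral_add_compl hs.measurableSet hfν]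
    simp only [a, b]
    abel
  have ha : ‖a‖ₑ ^ 2 ≤ ENNReal.ofReal δ * ∫⁻ x, ‖f x‖ₑ ^ 2 ∂μ := by
    refine (sq_enorm_integral_sub_le_of_le hs.ge_on_compl hfμ.restrict).trans ?_
    rw [Measure.restrict_apply_univ, Measure.restrict_apply_univ]
    exact mul_le_mul' (sub_le_ofReal_of_abs_measureReal_sub_le (hμν _ hs.measurableSet.compl))
      (setLIntegral_le_lintegral _ _)
  have hb : ‖b‖ₑ ^ 2 ≤ ENNReal.ofReal δ * ∫⁻ x, ‖f x‖ₑ ^ 2 ∂ν := by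
    refine (sq_enorm_integral_sub_le_of_le hs.le_on hfν.restrict).trans ?_
    rw [Measure.restrict_apply_univ, Measure.restrict_apply_univ]
    exact mul_le_mul' (sub_le_ofReal_of_abs_measureReal_sub_le
      (abs_sub_comm (μ.real s) _ ▸ hμν _ hs.measurableSet)) (setLIntegral_le_lintegral _ _)
  calc ‖∫ x, f x ∂μ - ∫ x, f x ∂ν‖ₑ ^ 2 = ‖a - b‖ₑ ^ 2 := by rw [hsplit]
    _ ≤ (‖a‖ₑ + ‖b‖ₑ) ^ 2 := by gcongr; exact enorm_sub_le
    _ ≤ 2 * (‖a‖ₑ ^ 2 + ‖b‖ₑ ^ 2) := ENNReal.add_sq_le_two_mul _ _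
    _ ≤ 2 * (ENNReal.ofReal δ * ∫⁻ x, ‖f x‖ₑ ^ 2 ∂μ + ENNReal.ofReal δ * ∫⁻ x, ‖f x‖ₑ ^ 2 ∂ν) := by
        gcongr
    _ = 2 * ENNReal.ofReal δ * (∫⁻ x, ‖f x‖ₑ ^ 2 ∂μ + ∫⁻ x, ‖f x‖ₑ ^ 2 ∂ν) := by ring

end MeasureTheory

namespace ProbabilityTheory

variable {α β : Type*} {mα : MeasurableSpace α} {mβ : MeasurableSpace β}

lemma aestronglyMeasurable_integral_kernel_of_comp {E : Type*} [NormedAddCommGroup E]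
    [NormedSpace ℝ E] {κ : Kernel α β} {μ : Measure α} {g : β → E}
    (hg : AEStronglyMeasurable g (κ ∘ₘ μ)) :
    AEStronglyMeasurable (fun x => ∫ y, g y ∂κ x) μ := by
  rw [Measure.comp_eq_comp_const_apply] at hg
  simpa using hg.integral_kernel_comp

lemma lintegral_sq_enorm_integral_sub_le {E : Type*} [NormedAddCommGroup E] [NormedSpace ℝ E]
    {κ : Kernel α β} [IsFiniteKernel κ] {μ : Measure α} [IsProbabilityMeasure μ]
    {ν : Measure β} [IsFiniteMeasure ν] (hκμ : κ ∘ₘ μ = ν) {δ : ℝ}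
    (hδ : ∀ x A, MeasurableSet A → |(κ x).real A - ν.real A| ≤ δ) {g : β → E}
    (hg : Integrable g ν) :
    ∫⁻ x, ‖∫ y, g y ∂κ x - ∫ y, g y ∂ν‖ₑ ^ 2 ∂μ ≤ 4 * ENNReal.ofReal δ * ∫⁻ y, ‖g y‖ₑ ^ 2 ∂ν := by
  have hint : ∀ᵐ x ∂μ, Integrable g (κ x) :=
    Measure.ae_integrable_of_integrable_comp (hκμ ▸ hg)
  have hmoment : ∫⁻ x, ∫⁻ y, ‖g y‖ₑ ^ 2 ∂κ x ∂μ = ∫⁻ y, ‖g y‖ₑ ^ 2 ∂ν := by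
    rw [← hκμ, Measure.lintegral_bind κ.aemeasurable]
    exact (hκμ ▸ hg.aestronglyMeasurable).enorm.pow_const 2
  calc ∫⁻ x, ‖∫ y, g y ∂κ x - ∫ y, g y ∂ν‖ₑ ^ 2 ∂μ
      ≤ ∫⁻ x, 2 * ENNReal.ofReal δ * (∫⁻ y, ‖g y‖ₑ ^ 2 ∂κ x + ∫⁻ y, ‖g y‖ₑ ^ 2 ∂ν) ∂μ :=
        lintegral_mono_ae <| hint.mono fun x hx =>
          sq_enorm_integral_sub_le_of_abs_measureReal_sub_le (hδ x) hx hg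
    _ = 2 * ENNReal.ofReal δ * (∫⁻ y, ‖g y‖ₑ ^ 2 ∂ν + ∫⁻ y, ‖g y‖ₑ ^ 2 ∂ν) := by
        rw [lintegral_const_mul' _ _ (by finiteness), lintegral_add_right _ measurable_const,
          hmoment, lintegral_const, measure_univ, mul_one]
    _ = 4 * ENNReal.ofReal δ * ∫⁻ y, ‖g y‖ₑ ^ 2 ∂ν := by ring

lemma eLpNorm_integral_sub_integral_le {κ : Kernel α β} [IsFiniteKernel κ] {μ : Measure α}
    [IsProbabilityMeasure μ] {ν : Measure β} [IsFiniteMeasure ν] (hκμ : κ ∘ₘ μ = ν) {δ : ℝ}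
    (hδ : ∀ x A, MeasurableSet A → |(κ x).real A - ν.real A| ≤ δ) {g : β → ℝ}
    (hg : MemLp g 2 ν) :
    (eLpNorm (fun x => ∫ y, g y ∂κ x - ∫ y, g y ∂ν) 2 μ).toReal ≤
      2 * √δ * (eLpNorm g 2 ν).toReal := by
  have hδ₀ : 0 ≤ δ :=
    (abs_nonneg _).trans (hδ (nonempty_of_isProbabilityMeasure μ).some ∅ .empty)
  have hsq := lintegral_sq_enorm_integral_sub_le hκμ hδ (hg.integrable one_le_two)
  rw [← sq_eLpNorm_two_eq_lintegral, ← sq_eLpNorm_two_eq_lintegral] at hsq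
  have hsq_real := ENNReal.toReal_mono (by finiteness [hg.eLpNorm_ne_top]) hsq
  simp only [ENNReal.toReal_mul, ENNReal.toReal_pow, ENNReal.toReal_ofReal hδ₀] at hsq_real
  refine (pow_le_pow_iff_left₀ ENNReal.toReal_nonneg (by positivity) two_ne_zero).1 ?_
  rw [mul_pow, mul_pow, Real.sq_sqrt hδ₀]
  norm_num at hsq_real ⊢
  exact hsq_real

lemma memLp_integral_sub_integral {κ : Kernel α β} [IsFiniteKernel κ] {μ : Measure α}
    [IsProbabilityMeasure μ] {ν : Measure β} [IsFiniteMeasure ν] (hκμ : κ ∘ₘ μ = ν) {δ : ℝ}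
    (hδ : ∀ x A, MeasurableSet A → |(κ x).real A - ν.real A| ≤ δ) {g : β → ℝ}
    (hg : MemLp g 2 ν) :
    MemLp (fun x => ∫ y, g y ∂κ x - ∫ y, g y ∂ν) 2 μ := by
  refine ⟨(aestronglyMeasurable_integral_kernel_of_comp (hκμ ▸ hg.1)).sub
    aestronglyMeasurable_const, ?_⟩
  have hsq := lintegral_sq_enorm_integral_sub_le hκμ hδ (hg.integrable one_le_two)
  rw [← sq_eLpNorm_two_eq_lintegral, ← sq_eLpNorm_two_eq_lintegral] at hsq
  have hfin : eLpNorm (fun x => ∫ y, g y ∂κ x - ∫ y, g y ∂ν) 2 μ ^ 2 < ∞ :=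
    hsq.trans_lt (by finiteness [hg.eLpNorm_ne_top])
  simpa using hfin

lemma abs_integral_mul_integral_sub_sq_le {κ : Kernel α α} [IsFiniteKernel κ] {π : Measure α}
    [IsProbabilityMeasure π] (hκπ : κ ∘ₘ π = π) {δ : ℝ}
    (hδ : ∀ x A, MeasurableSet A → |(κ x).real A - π.real A| ≤ δ) {g : α → ℝ}
    (hg : MemLp g 2 π) :
    |∫ x, g x * ∫ y, g y ∂κ x ∂π - (∫ x, g x ∂π) ^ 2| ≤
      2 * √δ * (eLpNorm g 2 π).toReal ^ 2 := by
  set c := ∫ x, g x ∂π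
  set h : α → ℝ := fun x => ∫ y, g y ∂κ x - c
  have hh : MemLp h 2 π := memLp_integral_sub_integral hκπ hδ hg
  have hcov : ∫ x, g x * ∫ y, g y ∂κ x ∂π - c ^ 2 = ∫ x, g x * h x ∂π := by
    have hsplit : ∀ x, g x * ∫ y, g y ∂κ x = g x * h x + c * g x := fun x => by ring
    simp_rw [hsplit]
    rw [integral_add (f := fun x => g x * h x) (hg.integrable_mul hh)
      ((hg.integrable one_le_two).const_mul c), integral_const_mul]
    ring
  calc |∫ x, g x * ∫ y, g y ∂κ x ∂π - c ^ 2|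
      = |∫ x, g x * h x ∂π| := by rw [hcov]
    _ ≤ (eLpNorm g 2 π).toReal * (eLpNorm h 2 π).toReal :=
        abs_integral_mul_le_eLpNorm_mul_eLpNorm hg hh
    _ ≤ (eLpNorm g 2 π).toReal * (2 * √δ * (eLpNorm g 2 π).toReal) := by
        gcongr; exact eLpNorm_integral_sub_integral_le hκπ hδ hg
    _ = 2 * √δ * (eLpNorm g 2 π).toReal ^ 2 := by ring

end ProbabilityTheory

instance isMarkovKernel_kernelPow {Ω : Type*} [MeasurableSpace Ω] (P : Kernel Ω Ω)
    [IsMarkovKernel P] (n : ℕ) : IsMarkovKernel (kernelPow P n) := by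
  induction n with
  | zero => rw [kernelPow]; infer_instance
  | succ n ih => rw [kernelPow]; infer_instance

lemma kernelPow_comp_eq_self {Ω : Type*} [MeasurableSpace Ω] {P : Kernel Ω Ω} {π : Measure Ω}
    (hπ : P ∘ₘ π = π) (n : ℕ) : kernelPow P n ∘ₘ π = π := by
  induction n with
  | zero => rw [kernelPow]; exact Measure.id_comp
  | succ n ih => rw [kernelPow, ← Measure.comp_assoc, hπ, ih]

lemma Real.sqrt_pow {t : ℝ} (ht : 0 ≤ t) (n : ℕ) : √(t ^ n) = √t ^ n := by
  rw [← Real.sqrt_sq (pow_nonneg (Real.sqrt_nonneg t) n), ← pow_mul, mul_comm, pow_mul,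
    Real.sq_sqrt ht]

theorem asymptotic_variance_finite_of_uniformly_ergodic_general
    {Ω : Type*} [MeasurableSpace Ω]
    (P : ProbabilityTheory.Kernel Ω Ω) [ProbabilityTheory.IsMarkovKernel P]
    (π : Measure Ω) [IsProbabilityMeasure π]
    (hstat : ∀ A : Set Ω, MeasurableSet A → ∫⁻ x, P x A ∂π = π A)
    (M t : ℝ) (ht : t ∈ Set.Ioo (0 : ℝ) 1)
    (hunif : ∀ (n : ℕ) (x : Ω) (A : Set Ω), MeasurableSet A →
      |((kernelPow P n) x A).toReal - (π A).toReal| ≤ M * t ^ n)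
    (g : Ω → ℝ) (hg : MemLp g 2 π) :
    Summable (fun n : ℕ =>
      |∫ x, g x * (∫ y, g y ∂((kernelPow P (n + 1)) x)) ∂π - (∫ x, g x ∂π) ^ 2|) := by
  have hπ : P ∘ₘ π = π :=
    Measure.ext fun A hA => (Measure.bind_apply hA P.aemeasurable).trans (hstat A hA)
  set C := 2 * √M * (eLpNorm g 2 π).toReal ^ 2
  have hcov (n : ℕ) :
      |∫ x, g x * (∫ y, g y ∂((kernelPow P (n + 1)) x)) ∂π - (∫ x, g x ∂π) ^ 2| ≤
        C * √t * √t ^ n := by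
    have := abs_integral_mul_integral_sub_sq_le (kernelPow_comp_eq_self hπ (n + 1))
      (hunif (n + 1)) hg
    rw [Real.sqrt_mul' _ (pow_nonneg ht.1.le _), Real.sqrt_pow ht.1.le, pow_succ' √t] at this
    linarith
  refine Summable.of_nonneg_of_le (fun n => abs_nonneg _) hcov ?_
  exact (summable_geometric_of_lt_one (Real.sqrt_nonneg t)
    ((Real.sqrt_lt' one_pos).2 (by simpa using ht.2))).mul_left (C * √t)

theorem asymptotic_variance_finite_of_uniformly_ergodic
    {Ω : Type*} [MeasurableSpace Ω]
    (P : ProbabilityTheory.Kernel Ω Ω) [ProbabilityTheory.IsMarkovKernel P]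
    (π : Measure Ω) [IsProbabilityMeasure π]
    (hstat : ∀ A : Set Ω, MeasurableSet A → ∫⁻ x, P x A ∂π = π A)
    (M t : ℝ) (hM : 0 ≤ M) (ht : t ∈ Set.Ioo (0 : ℝ) 1)
    (hunif : ∀ (n : ℕ) (x : Ω) (A : Set Ω), MeasurableSet A →
      |((kernelPow P n) x A).toReal - (π A).toReal| ≤ M * t ^ n)
    (g : Ω → ℝ) (hg : MemLp g 2 π) :
    Summable (fun n : ℕ =>
      |∫ x, g x * (∫ y, g y ∂((kernelPow P (n + 1)) x)) ∂π - (∫ x, g x ∂π) ^ 2|) :=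
  asymptotic_variance_finite_of_uniformly_ergodic_general P π hstat M t ht hunif g hg
end
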